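/- For real numbers α, β, γ with α² + βγ ≠ 0, the 3-dimensional Lie algebra with basis e₁,e₂,e₃ and brackets [e₁,e₂] = αe₂ + βe₃, [e₁,e₃] = γe₂ − αe₃, [e₂,e₃] = 0 admits a pseudo-Riemannian Lie algebra structure. -/
import Mathlib


/-- The family of brackets on `ℝ³`:
`[e₁,e₂] = αe₂ + βe₃`, `[e₁,e₃] = γe₂ − αe₃`, `[e₂,e₃] = 0`. -/
def famBr (α β γ : ℝ) (u v : Fin 3 → ℝ) : Fin 3 → ℝ :=
  ![0, α * (u 0 * v 1 - u 1 * v 0) + γ * (u 0 * v 2 - u 2 * v 0),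
       β * (u 0 * v 1 - u 1 * v 0) - α * (u 0 * v 2 - u 2 * v 0)]

/-- For `α² + βγ ≠ 0`, the Lie algebra with bracket `famBr α β γ` admits a
pseudo-Riemannian Lie algebra structure. -/
theorem stmt_6 (α β γ : ℝ) (h : α ^ 2 + β * γ ≠ 0) :
    ∃ a : LinearMap.BilinForm ℝ (Fin 3 → ℝ),
      (∀ u v, a u v = a v u) ∧
      (∀ u, (∀ w, a u w = 0) → u = 0) ∧
      ∃ A : (Fin 3 → ℝ) → (Fin 3 → ℝ) → (Fin 3 → ℝ),
        (∀ u v w, 2 * a (A u v) w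
          = a (famBr α β γ u v) w + a (famBr α β γ w u) v + a (famBr α β γ w v) u) ∧
        (∀ u v w, famBr α β γ (A u v) w + famBr α β γ u (A w v) = 0) := by
  refine ⟨LinearMap.mk₂ ℝ
      (fun u v => u 0 * v 0 - β * (u 1 * v 1) + α * (u 1 * v 2 + u 2 * v 1) + γ * (u 2 * v 2))
      (by intros; simp only [Pi.add_apply]; ring)
      (by intros; simp only [Pi.smul_apply, smul_eq_mul]; ring)
      (by intros; simp only [Pi.add_apply]; ring)
      (by intros; simp only [Pi.smul_apply, smul_eq_mul]; ring), ?_, ?_, ?_⟩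
  · intro u v; simp only [LinearMap.mk₂_apply]; ring
  · intro u hu
    have h0 := hu ![1, 0, 0]
    have h1 := hu ![0, 1, 0]
    have h2 := hu ![0, 0, 1]
    simp only [LinearMap.mk₂_apply, Matrix.cons_val_zero, Matrix.cons_val_one,
      Matrix.head_cons, Matrix.cons_val_two, Matrix.tail_cons] at h0 h1 h2
    have hu0 : u 0 = 0 := by linarith
    have hu1 : u 1 = 0 := by
      have : (α ^ 2 + β * γ) * u 1 = -γ * (-(β * (u 1 * 1)) + α * (u 1 * 0 + u 2 * 1))
          + α * (-(β * (u 1 * 0)) + α * (u 1 * 1 + u 2 * 0) + γ * (u 2 * 1)) := by ring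
      rw [show (-(β * (u 1 * 1)) + α * (u 1 * 0 + u 2 * 1)) = 0 by linarith,
        show (-(β * (u 1 * 0)) + α * (u 1 * 1 + u 2 * 0) + γ * (u 2 * 1)) = 0 by linarith] at this
      simpa [h] using this
    have hu2 : u 2 = 0 := by
      have : (α ^ 2 + β * γ) * u 2 = α * (-(β * (u 1 * 1)) + α * (u 1 * 0 + u 2 * 1))
          + β * (-(β * (u 1 * 0)) + α * (u 1 * 1 + u 2 * 0) + γ * (u 2 * 1)) := by ring
      rw [show (-(β * (u 1 * 1)) + α * (u 1 * 0 + u 2 * 1)) = 0 by linarith,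
        show (-(β * (u 1 * 0)) + α * (u 1 * 1 + u 2 * 0) + γ * (u 2 * 1)) = 0 by linarith] at this
      simpa [h] using this
    funext i
    fin_cases i <;> simpa using ‹_›
  · refine ⟨fun u v => ![0, u 0 * (α * v 1 + γ * v 2), u 0 * (β * v 1 - α * v 2)], ?_, ?_⟩
    · intro u v w
      simp only [LinearMap.mk₂_apply, famBr, Matrix.cons_val_zero, Matrix.cons_val_one,
        Matrix.head_cons, Matrix.cons_val_two, Matrix.tail_cons]
      ring
    · intro u v w
      funext i
      fin_cases i <;>
        simp only [famBr, Pi.add_apply, Matrix.cons_val_zero, Matrix.cons_val_one,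
          Matrix.head_cons, Matrix.cons_val_two, Matrix.tail_cons, Fin.isValue] <;>
        ring_nf <;> simp
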